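/- arXiv:1805.10268 — 5 statements merged into one kernel-verified Lean document; each statement's English description precedes it below -/
import Mathlib

section
/- Let C(n,u) be a 1-level EII code over a finite field F = GF(q) with parameters 0 ≤ u0 < u1 ≤ n, s0 ≥ 1, s1 ≥ 0, m = s0 + s1, horizontal code C0 an [n, n−u0, d0H] code admitting a systematic encoder on its first n−u0 coordinates, and vertical code V0 an [m, s0, d0V] code over F^{u1−u0} linear over F. Then C(n,u) is an F-linear subspace of the m×n arrays over F of F-dimension s0·(u1−u0), and its minimum distance d (the least number of nonzero entries of a nonzero array in C(n,u)) satisfies d ≥ d0V·d0H. -/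
open scoped BigOperators

section Defs

variable {F : Type*} [Field F]

/-- `C` has minimum (symbol-)Hamming distance exactly `d`. -/
def HasMinDist {ι S : Type*} [Fintype ι] [Zero S] [DecidableEq S]
    (C : Set (ι → S)) (d : ℕ) : Prop :=
  (∀ c ∈ C, c ≠ 0 → d ≤ hammingNorm c) ∧ ∃ c ∈ C, c ≠ 0 ∧ hammingNorm c = d

/-- weight of an `m × n` array: the number of nonzero entries. -/
def arrayWt [DecidableEq F] {m n : ℕ} (A : Matrix (Fin m) (Fin n) F) : ℕ :=
  hammingNorm (fun p : Fin m × Fin n => A p.1 p.2)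

/-- `C` admits a systematic encoder on its first `k` coordinates: the projection
onto the first `k` coordinates is a bijection onto `F^k`. -/
def SystematicOn {n : ℕ} (C : Submodule F (Fin n → F)) (k : ℕ) : Prop :=
  Function.Bijective (fun (c : C) (i : Fin k) =>
    if h : (i : ℕ) < n then (c : Fin n → F) ⟨i, h⟩ else 0)

/-- symbols of the array in columns `a, a+1, ..., a+w-1`. -/
def colSymb [Zero F] {m n : ℕ} (A : Matrix (Fin m) (Fin n) F) (a w : ℕ) :
    Fin m → Fin w → F :=
  fun r k => if hk : a + (k : ℕ) < n then A r ⟨a + k, hk⟩ else 0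

/-- the 1-level EII code with horizontal code `C0`, vertical code `V0` over `F^w`
(occupying columns `a,…,a+w-1`), and `a` initial zero columns. -/
def OneLevelEII {m n w : ℕ} (C0 : Submodule F (Fin n → F))
    (V0 : Submodule F (Fin m → Fin w → F)) (a : ℕ) :
    Set (Matrix (Fin m) (Fin n) F) :=
  { A | (∀ r (c : Fin n), (c : ℕ) < a → A r c = 0) ∧ (∀ r, A r ∈ C0) ∧
        colSymb A a w ∈ V0 }

end Defs

/-- A 1-level EII code `C(n,u)` over `GF(q)`, with horizontal code
`C0` an `[n, n-u0, d0H]` code systematic on its first `n-u0` coordinates and vertical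
code `V0` an `[m, s0, d0V]` code over `F^{u1-u0}`, is an `F`-linear subspace of the
`m × n` arrays of dimension `s0 * (u1 - u0)`, and its minimum distance `d` satisfies
`d ≥ d0V * d0H`. -/
theorem stmt0 {F : Type*} [Field F] [Fintype F] [DecidableEq F]
    {n m u0 u1 s0 s1 d0H d0V : ℕ}
    (hu01 : u0 < u1) (hu1n : u1 ≤ n)
    (hs0 : 1 ≤ s0) (hm : m = s0 + s1) (hs1 : s1 = 0 → u1 = n)
    (C0 : Submodule F (Fin n → F))
    (hC0dim : Module.finrank F C0 = n - u0)
    (hC0dist : HasMinDist (C0 : Set (Fin n → F)) d0H)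
    (hC0sys : SystematicOn C0 (n - u0))
    (V0 : Submodule F (Fin m → Fin (u1 - u0) → F))
    (hV0dim : Module.finrank F V0 = s0 * (u1 - u0))
    (hV0dist : HasMinDist (V0 : Set (Fin m → Fin (u1 - u0) → F)) d0V) :
    (∃ W : Submodule F (Matrix (Fin m) (Fin n) F),
        (W : Set (Matrix (Fin m) (Fin n) F)) = OneLevelEII C0 V0 (n - u1) ∧
        Module.finrank F W = s0 * (u1 - u0)) ∧
    (∀ A ∈ OneLevelEII C0 V0 (n - u1), A ≠ 0 → d0V * d0H ≤ arrayWt A) := by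
  classical
  have ha : True := trivial
  have haw : (n - u1) + (u1 - u0) = n - u0 := by omega
  have han : (n - u1) < n - u0 := by omega
  -- helper: (n - u1) codeword of C0 vanishing on the first n-u0 coords is zero
  have hrowzero : ∀ c : Fin n → F, c ∈ C0 →
      (∀ i : Fin n, (i : ℕ) < n - u0 → c i = 0) → c = 0 := by
    intro c hc hz
    have h0 : (fun (i : Fin (n - u0)) =>
        if h : (i : ℕ) < n then ((⟨c, hc⟩ : C0) : Fin n → F) ⟨i, h⟩ else 0) =
        (fun (i : Fin (n - u0)) =>
        if h : (i : ℕ) < n then ((0 : C0) : Fin n → F) ⟨i, h⟩ else 0) := by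
      funext i
      by_cases h : (i : ℕ) < n
      · rw [dif_pos h, dif_pos h]
        simpa using hz ⟨i, h⟩ i.isLt
      · rw [dif_neg h, dif_neg h]
    have := hC0sys.injective h0
    simpa [Subtype.ext_iff] using this
  -- key: EII array with zero column symbols is zero
  have hkey : ∀ A ∈ OneLevelEII C0 V0 (n - u1), colSymb A (n - u1) (u1 - u0) = 0 → A = 0 := by
    intro A hA hcs
    obtain ⟨hz, hrow, -⟩ := hA
    funext r
    have hr : A r = 0 := by
      refine hrowzero (A r) (hrow r) ?_
      intro i hi
      by_cases h : (i : ℕ) < (n - u1)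
      · exact hz r i h
      · have hk : (i : ℕ) - (n - u1) < (u1 - u0) := by omega
        have h2 := congrFun (congrFun hcs r) ⟨(i : ℕ) - (n - u1), hk⟩
        simp only [colSymb, Pi.zero_apply] at h2
        have h3 : (n - u1) + ((i : ℕ) - (n - u1)) < n := by omega
        rw [dif_pos h3] at h2
        have h4 : (⟨(n - u1) + ((i : ℕ) - (n - u1)), h3⟩ : Fin n) = i := by
          ext; simp; omega
        rwa [h4] at h2
    exact hr
  -- colSymb is additive and homogeneous
  have hcadd : ∀ A B : Matrix (Fin m) (Fin n) F,
      colSymb (A + B) (n - u1) (u1 - u0) = colSymb A (n - u1) (u1 - u0) + colSymb B (n - u1) (u1 - u0) := by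
    intro A B
    funext r k
    simp only [colSymb, Pi.add_apply]
    split <;> simp [Matrix.add_apply]
  have hcsmul : ∀ (t : F) (A : Matrix (Fin m) (Fin n) F),
      colSymb (t • A) (n - u1) (u1 - u0) = t • colSymb A (n - u1) (u1 - u0) := by
    intro t A
    funext r k
    simp only [colSymb, Pi.smul_apply]
    split <;> simp [Matrix.smul_apply]
  have hcsub : ∀ A B : Matrix (Fin m) (Fin n) F,
      colSymb (A - B) (n - u1) (u1 - u0) = colSymb A (n - u1) (u1 - u0) - colSymb B (n - u1) (u1 - u0) := by
    intro A B
    funext r k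
    simp only [colSymb, Pi.sub_apply]
    split <;> simp [Matrix.sub_apply]
  -- the submodule
  let W : Submodule F (Matrix (Fin m) (Fin n) F) :=
    { carrier := OneLevelEII C0 V0 (n - u1)
      add_mem' := by
        rintro A B ⟨hzA, hrA, hvA⟩ ⟨hzB, hrB, hvB⟩
        refine ⟨fun r c hc => by simp [Matrix.add_apply, hzA r c hc, hzB r c hc],
          fun r => C0.add_mem (hrA r) (hrB r), ?_⟩
        rw [hcadd]; exact V0.add_mem hvA hvB
      zero_mem' := by
        refine ⟨fun r c _ => rfl, fun r => C0.zero_mem, ?_⟩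
        have : colSymb (0 : Matrix (Fin m) (Fin n) F) (n - u1) (u1 - u0) = 0 := by
          funext r k
          simp only [colSymb]
          split <;> rfl
        rw [this]; exact V0.zero_mem
      smul_mem' := by
        rintro t A ⟨hzA, hrA, hvA⟩
        refine ⟨fun r c hc => by simp [Matrix.smul_apply, hzA r c hc],
          fun r => C0.smul_mem t (hrA r), ?_⟩
        rw [hcsmul]; exact V0.smul_mem t hvA }
  have hWmem : ∀ A : Matrix (Fin m) (Fin n) F, A ∈ W ↔ A ∈ OneLevelEII C0 V0 (n - u1) :=
    fun A => Iff.rfl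
  -- the linear map from W to V0
  let φ : W →ₗ[F] V0 :=
    { toFun := fun A => ⟨colSymb A.val (n - u1) (u1 - u0), A.2.2.2⟩
      map_add' := fun A B => Subtype.ext (hcadd A.val B.val)
      map_smul' := fun t A => Subtype.ext (hcsmul t A.val) }
  have hinj : Function.Injective φ := by
    intro A B hAB
    have hsub : colSymb (A.val - B.val) (n - u1) (u1 - u0) = 0 := by
      rw [hcsub]
      have : colSymb A.val (n - u1) (u1 - u0) = colSymb B.val (n - u1) (u1 - u0) := congrArg Subtype.val hAB
      rw [this, sub_self]
    have hmm : A.val - B.val ∈ OneLevelEII C0 V0 (n - u1) := (hWmem _).mp (W.sub_mem A.2 B.2)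
    have := hkey _ hmm hsub
    exact Subtype.ext (sub_eq_zero.mp this)
  have hsurj : Function.Surjective φ := by
    intro v
    -- build (n - u1) target vector for each row and use the systematic encoder
    have hsys := hC0sys.surjective
    set t : Fin m → Fin (n - u0) → F := fun r i =>
      if h : (n - u1) ≤ (i : ℕ) then v.val r ⟨(i : ℕ) - (n - u1), by omega⟩ else 0 with ht
    choose c hc using fun r => hsys (t r)
    have hcz : ∀ r (i : Fin (n - u0)), (c r).val ⟨i, by omega⟩ = t r i := by
      intro r i
      have := congrFun (hc r) i
      simpa only [dif_pos (show (i : ℕ) < n by omega)] using this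
    set A : Matrix (Fin m) (Fin n) F := fun r => (c r).val with hA
    have hz : ∀ r (j : Fin n), (j : ℕ) < (n - u1) → A r j = 0 := by
      intro r j hj
      have h1 : (j : ℕ) < n - u0 := by omega
      have := hcz r ⟨j, h1⟩
      simp only [ht] at this
      rw [dif_neg (by simpa using not_le.mpr hj)] at this
      simpa using this
    have hcs : colSymb A (n - u1) (u1 - u0) = v.val := by
      funext r k
      simp only [colSymb]
      have h3 : (n - u1) + (k : ℕ) < n := by omega
      rw [dif_pos h3]
      have h1 : (n - u1) + (k : ℕ) < n - u0 := by omega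
      have := hcz r ⟨(n - u1) + (k : ℕ), h1⟩
      simp only [ht] at this
      rw [dif_pos (by simp)] at this
      have h4 : (⟨(n - u1) + (k : ℕ) - (n - u1), by omega⟩ : Fin (u1 - u0)) = k := by
        ext; simp
      rw [h4] at this
      simpa using this
    have hmem : A ∈ W := by
      refine (hWmem A).mpr ⟨hz, fun r => (c r).2, ?_⟩
      rw [hcs]; exact v.2
    exact ⟨⟨A, hmem⟩, Subtype.ext hcs⟩
  have hrank : Module.finrank F W = s0 * (u1 - u0) := by
    rw [(LinearEquiv.ofBijective φ ⟨hinj, hsurj⟩).finrank_eq, hV0dim]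
  refine ⟨⟨W, rfl, hrank⟩, ?_⟩
  -- distance bound
  intro A hA hA0
  obtain ⟨hz, hrow, hv⟩ := hA
  have hcs0 : colSymb A (n - u1) (u1 - u0) ≠ 0 := fun h => hA0 (hkey A ⟨hz, hrow, hv⟩ h)
  have hdV : d0V ≤ hammingNorm (colSymb A (n - u1) (u1 - u0)) := hV0dist.1 _ hv hcs0
  set S : Finset (Fin m) := Finset.univ.filter (fun r => colSymb A (n - u1) (u1 - u0) r ≠ 0) with hS
  have hScard : hammingNorm (colSymb A (n - u1) (u1 - u0)) = S.card := rfl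
  have hrowbd : ∀ r ∈ S, d0H ≤ hammingNorm (A r) := by
    intro r hr
    rw [hS, Finset.mem_filter] at hr
    refine hC0dist.1 _ (hrow r) ?_
    intro h0
    apply hr.2
    funext k
    simp only [colSymb]
    split
    · rw [show A r = 0 from h0]; rfl
    · rfl
  have harr : arrayWt A = ∑ r, hammingNorm (A r) := by
    unfold arrayWt hammingNorm
    rw [Finset.card_filter]
    rw [Fintype.sum_prod_type]
    congr 1
    funext r
    rw [Finset.card_filter]
  calc d0V * d0H ≤ S.card * d0H := Nat.mul_le_mul_right d0H (hdV.trans_eq hScard)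
    _ ≤ ∑ r ∈ S, hammingNorm (A r) := by
        simpa [smul_eq_mul, Nat.mul_comm] using Finset.card_nsmul_le_sum S _ d0H hrowbd
    _ ≤ ∑ r, hammingNorm (A r) :=
        Finset.sum_le_sum_of_subset (Finset.subset_univ S)
    _ = arrayWt A := harr.symm
end

section
/- Let C(n,u) be a t-level EII code over a finite field F with t > 1, built as the sum of the 1-level EII codes C(n,u^{(i)}), 0 ≤ i ≤ t−1. Let u' = (u1 repeated s0+s1 times, u2 repeated s2 times, ..., u_t repeated s_t times), so that C(n,u') = Σ_{i=1}^{t−1} C(n,u^{(i)}) is a (t−1)-level EII code. Then C(n,u) is the internal direct sum of C(n,u^{(0)}) and C(n,u'); that is, C(n,u) = C(n,u^{(0)}) + C(n,u') and C(n,u^{(0)}) ∩ C(n,u') = {0}. -/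
open scoped BigOperators

section Defs

variable {F : Type*} [Field F]

/-- the sum of the 1-level EII component codes of levels `a ≤ i < t`, where level `i`
has horizontal code `Chor i`, vertical code `Vc i` over `F^{u(i+1)-u(i)}`, and
`n - u(i+1)` initial zero columns. -/
def EIICodeRange {m n : ℕ} (a t : ℕ) (u : ℕ → ℕ)
    (Chor : ℕ → Submodule F (Fin n → F))
    (Vc : (i : ℕ) → Submodule F (Fin m → Fin (u (i + 1) - u i) → F)) :
    Set (Matrix (Fin m) (Fin n) F) :=
  { A | ∃ g : ℕ → Matrix (Fin m) (Fin n) F,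
        (∀ i, a ≤ i → i < t → g i ∈ OneLevelEII (Chor i) (Vc i) (n - u (i + 1))) ∧
        A = ∑ i ∈ Finset.Ico a t, g i }

/-- the t-level EII code: sum of the 1-level EII component codes of levels `0 ≤ i < t`. -/
def EIICode {m n : ℕ} (t : ℕ) (u : ℕ → ℕ)
    (Chor : ℕ → Submodule F (Fin n → F))
    (Vc : (i : ℕ) → Submodule F (Fin m → Fin (u (i + 1) - u i) → F)) :
    Set (Matrix (Fin m) (Fin n) F) :=
  EIICodeRange 0 t u Chor Vc

end Defs

/-! A component code of level `a` vanishes on its first `n - u (a+1)` columns, while every row of a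
sum of component codes of levels `> a` lies in `Chor (a+1)` by nesting; that code is systematic on
exactly those columns, so only the zero array lies in both. -/

section EII

variable {F : Type*} [Field F]

theorem SystematicOn.eq_zero_of_forall_lt {n k : ℕ} {C : Submodule F (Fin n → F)}
    (hC : SystematicOn C k) {x : Fin n → F} (hx : x ∈ C)
    (hzero : ∀ c : Fin n, (c : ℕ) < k → x c = 0) : x = 0 := by
  have : (⟨x, hx⟩ : C) = 0 := hC.1 <| funext fun i => by
    dsimp only
    split_ifs with h
    · exact hzero ⟨i, h⟩ i.2
    · rfl
  simpa using congrArg Subtype.val this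

theorem antitoneOn_Iio_of_succ_le {α : Type*} [Preorder α] {f : ℕ → α} {t : ℕ}
    (hf : ∀ i, i + 1 < t → f (i + 1) ≤ f i) : AntitoneOn f (Set.Iio t) := by
  intro a _ i hit hai
  induction i, hai using Nat.le_induction with
  | base => exact le_rfl
  | succ j _ ih => exact (hf j hit).trans (ih (by simp only [Set.mem_Iio] at hit ⊢; omega))

variable {m n : ℕ} {u : ℕ → ℕ} {Chor : ℕ → Submodule F (Fin n → F)}
  {Vc : (i : ℕ) → Submodule F (Fin m → Fin (u (i + 1) - u i) → F)}

theorem mem_EIICodeRange_iff_exists_add {a t : ℕ} (hat : a < t) {A : Matrix (Fin m) (Fin n) F} :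
    A ∈ EIICodeRange a t u Chor Vc ↔
      ∃ x ∈ OneLevelEII (Chor a) (Vc a) (n - u (a + 1)),
        ∃ y ∈ EIICodeRange (a + 1) t u Chor Vc, A = x + y := by
  constructor
  · rintro ⟨g, hg, rfl⟩
    exact ⟨g a, hg a le_rfl hat, _, ⟨g, fun i hi hit => hg i (by omega) hit, rfl⟩,
      Finset.sum_eq_sum_Ico_succ_bot hat g⟩
  · rintro ⟨x, hx, y, ⟨g, hg, rfl⟩, rfl⟩
    refine ⟨Function.update g a x, fun i hai hit => ?_, ?_⟩
    · rcases hai.eq_or_lt with rfl | hai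
      · simpa using hx
      · simpa [hai.ne'] using hg i hai hit
    · rw [Finset.sum_eq_sum_Ico_succ_bot hat, Function.update_self]
      congr 1
      exact Finset.sum_congr rfl fun i hi =>
        (Function.update_of_ne (by simp only [Finset.mem_Ico] at hi; omega) _ _).symm

theorem row_mem_of_mem_EIICodeRange {a t : ℕ}
    (hnest : ∀ i, i + 1 < t → Chor (i + 1) ≤ Chor i) {A : Matrix (Fin m) (Fin n) F}
    (hA : A ∈ EIICodeRange a t u Chor Vc) (r : Fin m) : A r ∈ Chor a := by
  obtain ⟨g, hg, rfl⟩ := hA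
  rw [show (∑ i ∈ Finset.Ico a t, g i) r = ∑ i ∈ Finset.Ico a t, g i r from
    Finset.sum_apply (M := fun _ => Fin n → F) r _ _]
  exact Submodule.sum_mem _ fun i hi => by
    rw [Finset.mem_Ico] at hi
    exact antitoneOn_Iio_of_succ_le hnest (by simp only [Set.mem_Iio]; omega) hi.2 hi.1
      ((hg i hi.1 hi.2).2.1 r)

theorem eq_zero_of_mem_oneLevelEII_of_mem_EIICodeRange_succ {a t : ℕ}
    (hnest : ∀ i, i + 1 < t → Chor (i + 1) ≤ Chor i)
    (hsys : SystematicOn (Chor (a + 1)) (n - u (a + 1))) {A : Matrix (Fin m) (Fin n) F}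
    (hA₀ : A ∈ OneLevelEII (Chor a) (Vc a) (n - u (a + 1)))
    (hA : A ∈ EIICodeRange (a + 1) t u Chor Vc) : A = 0 :=
  funext fun r => hsys.eq_zero_of_forall_lt (row_mem_of_mem_EIICodeRange hnest hA r) (hA₀.1 r)

end EII

theorem stmt2_general {F : Type*} [Field F]
    {t n m : ℕ} (ht : 1 < t)
    (u : ℕ → ℕ)
    (Chor : ℕ → Submodule F (Fin n → F))
    (hnest : ∀ i, i + 1 < t → Chor (i + 1) < Chor i)
    (hCsys : ∀ i < t, SystematicOn (Chor i) (n - u i))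
    (Vc : (i : ℕ) → Submodule F (Fin m → Fin (u (i + 1) - u i) → F)) :
    (∀ A : Matrix (Fin m) (Fin n) F,
        A ∈ EIICode t u Chor Vc ↔
          ∃ x ∈ OneLevelEII (Chor 0) (Vc 0) (n - u 1),
            ∃ y ∈ EIICodeRange 1 t u Chor Vc, A = x + y) ∧
    (∀ A : Matrix (Fin m) (Fin n) F,
        A ∈ OneLevelEII (Chor 0) (Vc 0) (n - u 1) →
        A ∈ EIICodeRange 1 t u Chor Vc → A = 0) :=
  ⟨fun _ => mem_EIICodeRange_iff_exists_add (by omega),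
    fun _ => eq_zero_of_mem_oneLevelEII_of_mem_EIICodeRange_succ
      (fun i hi => (hnest i hi).le) (hCsys 1 ht)⟩

/-- For `t > 1`, the t-level EII code `C(n,u)` is the internal direct
sum of its first 1-level component code `C(n,u^{(0)})` and the `(t-1)`-level EII code
`C(n,u')` given by the remaining levels. -/
theorem stmt2 {F : Type*} [Field F] [DecidableEq F]
    {t n m : ℕ} (ht : 1 < t)
    (u s : ℕ → ℕ) (dH dV : ℕ → ℕ)
    (hu : ∀ i < t, u i < u (i + 1)) (hun : u t ≤ n)
    (hs : ∀ i < t, 1 ≤ s i) (hst : s t = 0 → u t = n)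
    (hm : m = ∑ i ∈ Finset.range (t + 1), s i)
    (Chor : ℕ → Submodule F (Fin n → F))
    (hnest : ∀ i, i + 1 < t → Chor (i + 1) < Chor i)
    (hCdim : ∀ i < t, Module.finrank F (Chor i) = n - u i)
    (hCsys : ∀ i < t, SystematicOn (Chor i) (n - u i))
    (hCdist : ∀ i < t, HasMinDist (Chor i : Set (Fin n → F)) (dH i))
    (Vc : (i : ℕ) → Submodule F (Fin m → Fin (u (i + 1) - u i) → F))
    (hVdim : ∀ i < t, Module.finrank F (Vc i)
        = (m - ∑ j ∈ Finset.Icc (i + 1) t, s j) * (u (i + 1) - u i))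
    (hVdist : ∀ i < t, HasMinDist (Vc i : Set (Fin m → Fin (u (i + 1) - u i) → F))
        (dV (t - 1 - i))) :
    (∀ A : Matrix (Fin m) (Fin n) F,
        A ∈ EIICode t u Chor Vc ↔
          ∃ x ∈ OneLevelEII (Chor 0) (Vc 0) (n - u 1),
            ∃ y ∈ EIICodeRange 1 t u Chor Vc, A = x + y) ∧
    (∀ A : Matrix (Fin m) (Fin n) F,
        A ∈ OneLevelEII (Chor 0) (Vc 0) (n - u 1) →
        A ∈ EIICodeRange 1 t u Chor Vc → A = 0) :=
  stmt2_general ht u Chor hnest hCsys Vc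
end

section
/- Let C(n,u) be a t-level EII code over a finite field F, with horizontal codes C_i of minimum distance d_i^H and vertical codes V_i of minimum distance d_i^V. Then the minimum distance d of C(n,u) (the least number of nonzero entries of a nonzero array in C(n,u)) satisfies d ≥ min{ d_i^H · d_{t−1−i}^V : 0 ≤ i ≤ t−1 }. -/
open scoped BigOperators

/-!
Let `j₀` be the lowest level whose component is nonzero. By nesting, every row of the array
lies in `C_{j₀}`, and the level-`j₀` symbol vector is a nonzero codeword of `V_{j₀}` (a row
of a level-`j₀` component vanishing on that symbol vanishes on the first `n - u_{j₀}`
columns, hence is zero by systematicity). A row on which this symbol is nonzero is a nonzero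
row of the array: in the highest level contributing to that row, systematicity gives a nonzero
entry in a column where all lower levels are still zero. So at least `d^V` rows are nonzero,
each of weight at least `d^H`.
-/
namespace SystematicOn

variable {F : Type*} [Field F] {n k : ℕ} {C : Submodule F (Fin n → F)}

theorem eq_zero_of_forall_lt_s4 (h : SystematicOn C k) {c : Fin n → F} (hc : c ∈ C)
    (hz : ∀ i : Fin n, (i : ℕ) < k → c i = 0) : c = 0 := by
  have : (⟨c, hc⟩ : C) = 0 := h.injective <| funext fun i => by
    simp only [ZeroMemClass.coe_zero, Pi.zero_apply, dite_eq_ite, ite_self]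
    split_ifs with hi
    · exact hz _ i.2
    · rfl
  exact congrArg Subtype.val this

theorem exists_lt_ne_zero (h : SystematicOn C k) {c : Fin n → F} (hc : c ∈ C) (hc0 : c ≠ 0) :
    ∃ i : Fin n, (i : ℕ) < k ∧ c i ≠ 0 := by
  by_contra! hz
  exact hc0 (h.eq_zero_of_forall_lt_s4 hc hz)

end SystematicOn

theorem sum_ne_zero_of_staircase {F ι : Type*} [Field F] [LinearOrder ι] {n : ℕ}
    {S : Finset ι} {C : ι → Submodule F (Fin n → F)} {a k : ι → ℕ}
    (hsys : ∀ j ∈ S, SystematicOn (C j) (k j)) (hka : ∀ i ∈ S, ∀ j ∈ S, i < j → k j ≤ a i)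
    {x : ι → Fin n → F} (hx : ∀ j ∈ S, x j ∈ C j)
    (hlead : ∀ j ∈ S, ∀ c : Fin n, (c : ℕ) < a j → x j c = 0)
    (hne : ∃ j ∈ S, x j ≠ 0) : ∑ j ∈ S, x j ≠ 0 := by
  classical
  obtain ⟨j, hjS, hxj⟩ := hne
  obtain ⟨M, hM, hMmax⟩ :=
    Finset.exists_max_image (S.filter (x · ≠ 0)) id ⟨j, Finset.mem_filter.2 ⟨hjS, hxj⟩⟩
  rw [Finset.mem_filter] at hM
  obtain ⟨c, hck, hxc⟩ := (hsys M hM.1).exists_lt_ne_zero (hx M hM.1) hM.2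
  intro hsum
  have hsum_c := congrFun hsum c
  rw [Finset.sum_apply, Finset.sum_eq_single_of_mem M hM.1] at hsum_c
  · exact hxc hsum_c
  intro j hj hjM
  rcases hjM.lt_or_gt with hlt | hgt
  · exact hlead j hj c (hck.trans_le (hka j hj M hM.1 hlt))
  · have hxj : x j = 0 :=
      not_not.1 fun hxj => hgt.not_ge (hMmax j (Finset.mem_filter.2 ⟨hj, hxj⟩))
    rw [hxj, Pi.zero_apply]

section Arrays

theorem Matrix.sum_row {α β m n : Type*} [AddCommMonoid α] (s : Finset β)
    (g : β → Matrix m n α) (i : m) : (∑ j ∈ s, g j) i = ∑ j ∈ s, g j i :=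
  Finset.sum_apply i s g

variable {F : Type*} [Field F] {m n : ℕ}

theorem colSymb_apply_eq_zero {A : Matrix (Fin m) (Fin n) F} {r : Fin m} (hr : A r = 0)
    (a w : ℕ) : colSymb A a w r = 0 := by
  funext k
  simp [colSymb, hr]

theorem OneLevelEII.eq_zero_of_colSymb_eq_zero {w a k : ℕ} {C0 : Submodule F (Fin n → F)}
    {V0 : Submodule F (Fin m → Fin w → F)} {A : Matrix (Fin m) (Fin n) F}
    (hA : A ∈ OneLevelEII C0 V0 a) (hsys : SystematicOn C0 k) (hk : k ≤ a + w)
    (hcol : colSymb A a w = 0) : A = 0 := by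
  obtain ⟨hzero, hrows, -⟩ := hA
  funext r
  refine hsys.eq_zero_of_forall_lt_s4 (hrows r) fun i hi => ?_
  by_cases hia : (i : ℕ) < a
  · exact hzero r i hia
  · have hsymb := congrFun (congrFun hcol r) ⟨i - a, by omega⟩
    simp only [colSymb, Pi.zero_apply] at hsymb
    rw [dif_pos (by omega)] at hsymb
    convert hsymb using 2
    ext
    simp only
    omega

variable [DecidableEq F]

theorem arrayWt_eq_sum_hammingNorm (A : Matrix (Fin m) (Fin n) F) :
    arrayWt A = ∑ r, hammingNorm (A r) := by
  simp [arrayWt, hammingNorm, Finset.card_filter, Fintype.sum_prod_type]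

theorem mul_le_arrayWt {S : Type*} [Zero S] [DecidableEq S] {A : Matrix (Fin m) (Fin n) F}
    {v : Fin m → S} {dH dV : ℕ} (hrow : ∀ r, A r ≠ 0 → dH ≤ hammingNorm (A r))
    (hv : dV ≤ hammingNorm v) (hsupp : ∀ r, v r ≠ 0 → A r ≠ 0) : dH * dV ≤ arrayWt A := by
  classical
  set R := Finset.univ.filter fun r => A r ≠ 0
  have hvR : hammingNorm v ≤ R.card := Finset.card_le_card fun r hr =>
    Finset.mem_filter.2 ⟨Finset.mem_univ r, hsupp r (Finset.mem_filter.1 hr).2⟩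
  calc dH * dV ≤ dH * R.card := Nat.mul_le_mul_left _ (hv.trans hvR)
    _ = ∑ _r ∈ R, dH := by rw [Finset.sum_const, smul_eq_mul, mul_comm]
    _ ≤ ∑ r ∈ R, hammingNorm (A r) :=
        Finset.sum_le_sum fun r hr => hrow r (Finset.mem_filter.1 hr).2
    _ ≤ ∑ r, hammingNorm (A r) := Finset.sum_le_sum_of_subset (Finset.filter_subset _ _)
    _ = arrayWt A := (arrayWt_eq_sum_hammingNorm A).symm

end Arrays

section Levels

variable {F : Type*} [Field F] {t n m : ℕ} {u : ℕ → ℕ} {Chor : ℕ → Submodule F (Fin n → F)}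
  {Vc : (i : ℕ) → Submodule F (Fin m → Fin (u (i + 1) - u i) → F)}
  {g : ℕ → Matrix (Fin m) (Fin n) F}

theorem row_sum_mem_of_eq_zero_of_lt
    (hg : ∀ j < t, g j ∈ OneLevelEII (Chor j) (Vc j) (n - u (j + 1)))
    (hC : AntitoneOn Chor (Set.Iio t)) {j₀ : ℕ} (hj₀ : j₀ < t) (hlow : ∀ j < j₀, g j = 0)
    (r : Fin m) : (∑ j ∈ Finset.Ico 0 t, g j) r ∈ Chor j₀ := by
  rw [Matrix.sum_row]
  refine Submodule.sum_mem _ fun j hj => ?_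
  have hjt := (Finset.mem_Ico.1 hj).2
  rcases lt_or_ge j j₀ with hlt | hge
  · rw [hlow j hlt]
    exact zero_mem _
  · exact hC hj₀ hjt hge ((hg j hjt).2.1 r)

theorem row_sum_ne_zero
    (hg : ∀ j < t, g j ∈ OneLevelEII (Chor j) (Vc j) (n - u (j + 1)))
    (hu : MonotoneOn u (Set.Iic t)) (hsys : ∀ j < t, SystematicOn (Chor j) (n - u j))
    {j₀ : ℕ} (hj₀ : j₀ < t) {r : Fin m} (hr : g j₀ r ≠ 0) :
    (∑ j ∈ Finset.Ico 0 t, g j) r ≠ 0 := by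
  rw [Matrix.sum_row]
  refine sum_ne_zero_of_staircase (C := Chor) (a := fun j => n - u (j + 1))
    (k := fun j => n - u j) (fun j hj => hsys j (Finset.mem_Ico.1 hj).2) ?_
    (fun j hj => (hg j (Finset.mem_Ico.1 hj).2).2.1 r)
    (fun j hj => (hg j (Finset.mem_Ico.1 hj).2).1 r)
    ⟨j₀, Finset.mem_Ico.2 ⟨j₀.zero_le, hj₀⟩, hr⟩
  intro i hi j hj hij
  exact Nat.sub_le_sub_left (hu (Set.mem_Iic.2 (Finset.mem_Ico.1 hi).2)
    (Set.mem_Iic.2 (Finset.mem_Ico.1 hj).2.le) hij) n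

end Levels

/-- The minimum distance `d` of a t-level EII code `C(n,u)` satisfies
`d ≥ min { d_i^H · d_{t−1−i}^V : 0 ≤ i ≤ t−1 }`: every nonzero array of the code has
at least that many nonzero entries. -/
theorem stmt4 {F : Type*} [Field F] [DecidableEq F]
    {t n m : ℕ} (ht : 1 ≤ t)
    (u : ℕ → ℕ) (dH dV : ℕ → ℕ)
    (hu : ∀ i < t, u i < u (i + 1))
    (Chor : ℕ → Submodule F (Fin n → F))
    (hnest : ∀ i, i + 1 < t → Chor (i + 1) < Chor i)
    (hCsys : ∀ i < t, SystematicOn (Chor i) (n - u i))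
    (hCdist : ∀ i < t, HasMinDist (Chor i : Set (Fin n → F)) (dH i))
    (Vc : (i : ℕ) → Submodule F (Fin m → Fin (u (i + 1) - u i) → F))
    (hVdist : ∀ i < t, HasMinDist (Vc i : Set (Fin m → Fin (u (i + 1) - u i) → F))
        (dV (t - 1 - i))) :
    ∀ A ∈ EIICode t u Chor Vc, A ≠ 0 →
      (Finset.range t).inf' (Finset.nonempty_range_iff.mpr (by omega))
        (fun i => dH i * dV (t - 1 - i)) ≤ arrayWt A := by
  rintro _ ⟨g, hg, rfl⟩ hA
  replace hg : ∀ j < t, g j ∈ OneLevelEII (Chor j) (Vc j) (n - u (j + 1)) :=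
    fun j hj => hg j j.zero_le hj
  have hu_mono : MonotoneOn u (Set.Iic t) :=
    (strictMonoOn_Iic_of_lt_succ fun i hi => by simpa using hu i hi).monotoneOn
  have hC_anti : AntitoneOn Chor (Set.Iio t) :=
    antitoneOn_of_add_one_le Set.ordConnected_Iio fun i _ _ hi => (hnest i hi).le
  have hex : ∃ j, j < t ∧ g j ≠ 0 := by
    obtain ⟨j, hj, hgj⟩ := Finset.exists_ne_zero_of_sum_ne_zero hA
    exact ⟨j, (Finset.mem_Ico.1 hj).2, hgj⟩
  obtain ⟨j₀, ⟨hj₀, hgj₀⟩, hlow⟩ : ∃ j₀, (j₀ < t ∧ g j₀ ≠ 0) ∧ ∀ j < j₀, g j = 0 :=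
    ⟨Nat.find hex, Nat.find_spec hex, fun j hj => not_not.1 fun hgj =>
      Nat.find_min hex hj ⟨hj.trans (Nat.find_spec hex).1, hgj⟩⟩
  have hsymb : colSymb (g j₀) (n - u (j₀ + 1)) (u (j₀ + 1) - u j₀) ≠ 0 := fun h =>
    hgj₀ (OneLevelEII.eq_zero_of_colSymb_eq_zero (hg _ hj₀) (hCsys _ hj₀) (by omega) h)
  refine (Finset.inf'_le _ (Finset.mem_range.2 hj₀)).trans (mul_le_arrayWt
    (fun r hr => (hCdist _ hj₀).1 _ (row_sum_mem_of_eq_zero_of_lt hg hC_anti hj₀ hlow r) hr)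
    ((hVdist _ hj₀).1 _ (hg _ hj₀).2.2 hsymb) fun r hr => ?_)
  exact row_sum_ne_zero hg hu_mono hCsys hj₀ fun h => hr (colSymb_apply_eq_zero h _ _)
end

section
/- Let C(n,u) be a 1-level EII code over F = GF(q) with u1 = n, horizontal code C0 an [n, n−u0, d0H] code and vertical code V0 an [m, s0, d0V] code over F^{n−u0}, and suppose that n−u0 = k_opt^{(q)}[n, d0H], that d0H = d_opt^{(q)}[n, n−u0], and that there exists j with 0 ≤ j ≤ s0−1 such that d_opt^{(q)}[(m−j)n, (s0−j)(n−u0)] = d0V·d0H. Then the minimum distance d of C(n,u) meets bound (3): d = d0V·d0H = min{ d_opt^{(q)}[(m−j)n, k − j·k*] : 0 ≤ j ≤ ⌈k/k*⌉ − 1 }, where k = s0(n−u0) is the dimension of C(n,u) and k* = k_opt^{(q)}[n, d0H]. -/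
open scoped BigOperators

section Defs

variable {F : Type*} [Field F]

/-- `C` has minimum (symbol-)Hamming distance at least `d`. -/
def MinDistAtLeast {ι S : Type*} [Fintype ι] [Zero S] [DecidableEq S]
    (C : Set (ι → S)) (d : ℕ) : Prop :=
  ∀ c ∈ C, c ≠ 0 → d ≤ hammingNorm c

/-- `d_opt^{(q)}[N,K]`: the largest minimum distance of a linear `[N,K]` code over `F`. -/
noncomputable def dOpt (F : Type*) [Field F] [DecidableEq F] (N K : ℕ) : ℕ :=
  sSup {d : ℕ | ∃ C : Submodule F (Fin N → F),
    Module.finrank F C = K ∧ HasMinDist (C : Set (Fin N → F)) d}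

/-- `k_opt^{(q)}[N,D]`: the largest dimension of a linear code of length `N` and
minimum distance at least `D` over `F`. -/
noncomputable def kOpt (F : Type*) [Field F] [DecidableEq F] (N D : ℕ) : ℕ :=
  sSup {k : ℕ | ∃ C : Submodule F (Fin N → F),
    Module.finrank F C = k ∧ MinDistAtLeast (C : Set (Fin N → F)) D}

end Defs


section Aux

lemma hn_le_card {ι S : Type*} [Fintype ι] [Zero S] [DecidableEq S] (x : ι → S) :
    hammingNorm x ≤ Fintype.card ι := by
  simpa [hammingNorm] using Finset.card_filter_le Finset.univ (fun i => x i ≠ 0)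

lemma hn_comp_equiv {ι ι' S : Type*} [Fintype ι] [Fintype ι'] [Zero S] [DecidableEq S]
    (e : ι ≃ ι') (x : ι' → S) : hammingNorm (x ∘ e) = hammingNorm x := by
  unfold hammingNorm
  exact Finset.card_equiv e (by simp)

lemma hn_prod {α β S : Type*} [Fintype α] [Fintype β] [Zero S] [DecidableEq S]
    (f : α → β → S) :
    hammingNorm (fun p : α × β => f p.1 p.2) = ∑ a, hammingNorm (f a) := by
  simp [hammingNorm, Finset.card_filter, Fintype.sum_prod_type]

lemma exists_min_dist {F : Type*} [Field F] [DecidableEq F] {N : ℕ}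
    (C : Submodule F (Fin N → F)) (hne : ∃ c ∈ C, c ≠ (0 : Fin N → F)) :
    ∃ d, HasMinDist (C : Set (Fin N → F)) d := by
  set S : Set ℕ := {k | ∃ c ∈ C, c ≠ (0 : Fin N → F) ∧ hammingNorm c = k} with hS
  have hSne : S.Nonempty := by
    obtain ⟨c, hc, hc0⟩ := hne
    exact ⟨hammingNorm c, c, hc, hc0, rfl⟩
  obtain ⟨c, hc, hc0, hcw⟩ := Nat.sInf_mem hSne
  refine ⟨sInf S, fun x hx hx0 => Nat.sInf_le ⟨x, hx, hx0, rfl⟩, c, hc, hc0, hcw⟩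

lemma dOpt_bddAbove (F : Type*) [Field F] [DecidableEq F] (N : ℕ) :
    BddAbove {d : ℕ | ∃ C : Submodule F (Fin N → F),
      Module.finrank F C = N ∧ True} ∨ True := Or.inr trivial

lemma bdd_dOpt_set {F : Type*} [Field F] [DecidableEq F] (N K : ℕ) :
    BddAbove {d : ℕ | ∃ C : Submodule F (Fin N → F),
      Module.finrank F C = K ∧ HasMinDist (C : Set (Fin N → F)) d} := by
  refine ⟨N, fun d hd => ?_⟩
  obtain ⟨C, -, -, c, -, -, hcw⟩ := hd
  calc d = hammingNorm c := hcw.symm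
    _ ≤ Fintype.card (Fin N) := hn_le_card c
    _ = N := Fintype.card_fin N

end Aux

set_option maxHeartbeats 1000000 in
/-- A 1-level EII code with `u1 = n` whose horizontal code is optimal,
such that for some `0 ≤ j ≤ s0−1`, `d_opt[(m−j)n, (s0−j)(n−u0)] = d0V·d0H`, has minimum
distance exactly `d0V·d0H`, meeting bound (3). -/
theorem stmt7 {F : Type*} [Field F] [Fintype F] [DecidableEq F]
    {n m u0 s0 s1 d0H d0V : ℕ}
    (hu0n : u0 < n) (hs0 : 1 ≤ s0) (hm : m = s0 + s1)
    (C0 : Submodule F (Fin n → F))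
    (hC0dim : Module.finrank F C0 = n - u0)
    (hC0dist : HasMinDist (C0 : Set (Fin n → F)) d0H)
    (hC0sys : SystematicOn C0 (n - u0))
    (hkopt : n - u0 = kOpt F n d0H)
    (hdopt : d0H = dOpt F n (n - u0))
    (V0 : Submodule F (Fin m → Fin (n - u0) → F))
    (hV0dim : Module.finrank F V0 = s0 * (n - u0))
    (hV0dist : HasMinDist (V0 : Set (Fin m → Fin (n - u0) → F)) d0V)
    (hj : ∃ j : ℕ, j ≤ s0 - 1 ∧
      dOpt F ((m - j) * n) ((s0 - j) * (n - u0)) = d0V * d0H) :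
    ((∀ A ∈ OneLevelEII C0 V0 (n - n), A ≠ 0 → d0V * d0H ≤ arrayWt A) ∧
      (∃ A ∈ OneLevelEII C0 V0 (n - n), A ≠ 0 ∧ arrayWt A = d0V * d0H)) ∧
    d0V * d0H =
      sInf {d : ℕ | ∃ j : ℕ,
        j < (s0 * (n - u0) + kOpt F n d0H - 1) / kOpt F n d0H ∧
        d = dOpt F ((m - j) * n) (s0 * (n - u0) - j * kOpt F n d0H)} := by
  classical
  obtain ⟨j0, hj0le, hj0⟩ := hj
  have hwpos : 1 ≤ n - u0 := by omega
  have hwn : n - u0 ≤ n := Nat.sub_le _ _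
  have hnpos : 0 < n := by omega
  rw [Nat.sub_self, ← hkopt]
  -- the systematic encoder as a linear equivalence
  set σlin : C0 →ₗ[F] (Fin (n - u0) → F) :=
    { toFun := fun c (i : Fin (n - u0)) =>
        if h : (i : ℕ) < n then (c : Fin n → F) ⟨i, h⟩ else 0
      map_add' := by
        intro x y; funext i; by_cases h : (i : ℕ) < n <;> simp [h]
      map_smul' := by
        intro a x; funext i; by_cases h : (i : ℕ) < n <;> simp [h] } with hσlin
  have hbij : Function.Bijective σlin := hC0sys
  set E : C0 ≃ₗ[F] (Fin (n - u0) → F) := LinearEquiv.ofBijective σlin hbij with hE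
  -- `cw x` : the codeword of `C0` with systematic part `x`
  set cw : (Fin (n - u0) → F) → (Fin n → F) := fun x => ((E.symm x : C0) : Fin n → F) with hcw
  have hcw_mem : ∀ x, cw x ∈ C0 := fun x => (E.symm x).2
  have hcw_add : ∀ x y, cw (x + y) = cw x + cw y := by
    intro x y; simp [hcw, map_add]
  have hcw_smul : ∀ (a : F) x, cw (a • x) = a • cw x := by
    intro a x; simp [hcw, map_smul]
  have hcw_zero : cw 0 = 0 := by simp [hcw]
  have hσcw : ∀ x, σlin ⟨cw x, hcw_mem x⟩ = x := by
    intro x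
    have : σlin (E.symm x) = x := E.apply_symm_apply x
    simpa [hcw] using this
  have hcw_eq_zero : ∀ x, cw x = 0 → x = 0 := by
    intro x hx
    have h1 : E.symm x = 0 := by
      apply Subtype.ext; simpa [hcw] using hx
    have := congrArg E h1
    simpa using this
  have hcw_sig : ∀ x (k : Fin (n - u0)), cw x ⟨(k : ℕ), lt_of_lt_of_le k.2 hwn⟩ = x k := by
    intro x k
    have h1 := congrFun (hσcw x) k
    rw [hσlin] at h1
    simpa [dif_pos (lt_of_lt_of_le k.2 hwn)] using h1
  have hcw_wt : ∀ x, x ≠ 0 → d0H ≤ hammingNorm (cw x) := by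
    intro x hx
    refine hC0dist.1 (cw x) (hcw_mem x) ?_
    intro h; exact hx (hcw_eq_zero x h)
  -- column symbols with offset 0
  have hcs : ∀ (A : Matrix (Fin m) (Fin n) F) (r : Fin m) (k : Fin (n - u0)),
      colSymb A 0 (n - u0) r k = A r ⟨(k : ℕ), lt_of_lt_of_le k.2 hwn⟩ := by
    intro A r k
    have hk : 0 + (k : ℕ) < n := by have := k.2; omega
    simp only [colSymb, dif_pos hk]
    congr 1
    exact Fin.ext (by simp)
  -- arrays built from vertical codewords
  set Av : (Fin m → Fin (n - u0) → F) → Matrix (Fin m) (Fin n) F :=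
    fun v r c => cw (v r) c with hAv
  have hAv_colSymb : ∀ v, colSymb (Av v) 0 (n - u0) = v := by
    intro v; funext r k
    rw [hcs]
    exact hcw_sig (v r) k
  have hAv_mem : ∀ v ∈ V0, Av v ∈ OneLevelEII C0 V0 0 := by
    intro v hv
    refine ⟨fun r c hc => absurd hc (by omega), fun r => hcw_mem (v r), ?_⟩
    rw [hAv_colSymb]; exact hv
  have hAv_ne : ∀ v, v ≠ 0 → Av v ≠ 0 := by
    intro v hv hA
    apply hv
    funext r
    apply hcw_eq_zero
    funext c
    exact congrFun (congrFun hA r) c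
  have hAv_wt : ∀ v, arrayWt (Av v) = ∑ r : Fin m, hammingNorm (cw (v r)) := by
    intro v
    exact hn_prod (fun r c => cw (v r) c)
  -- rows of an EII array are determined by the column symbols
  have hrow_eq : ∀ A ∈ OneLevelEII C0 V0 0, ∀ r : Fin m,
      A r = cw (colSymb A 0 (n - u0) r) := by
    rintro A ⟨h0, hrow, hcol⟩ r
    have h1 : σlin ⟨A r, hrow r⟩ = colSymb A 0 (n - u0) r := by
      funext k
      rw [hcs, hσlin]
      exact dif_pos (lt_of_lt_of_le k.2 hwn)
    have h2 : E.symm (colSymb A 0 (n - u0) r) = ⟨A r, hrow r⟩ := by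
      rw [← h1]
      exact E.symm_apply_apply _
    simp [hcw, h2]
  -- PART A : lower bound on the weight of nonzero arrays
  have partA : ∀ A ∈ OneLevelEII C0 V0 0, A ≠ 0 → d0V * d0H ≤ arrayWt A := by
    intro A hA hA0
    obtain ⟨h0, hrow, hcol⟩ := hA
    set v : Fin m → Fin (n - u0) → F := colSymb A 0 (n - u0) with hv
    have hveq : ∀ r, A r = cw (v r) := hrow_eq A ⟨h0, hrow, hcol⟩
    have hv0 : v ≠ 0 := by
      intro h
      apply hA0
      funext r c
      have := congrFun (hveq r) c
      rw [h] at this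
      simpa [hcw_zero] using this
    have hdv : d0V ≤ hammingNorm v := hV0dist.1 v hcol hv0
    have hAwt : arrayWt A = ∑ r : Fin m, hammingNorm (A r) :=
      hn_prod (fun r c => A r c)
    calc d0V * d0H ≤ hammingNorm v * d0H := Nat.mul_le_mul_right _ hdv
      _ = ∑ r ∈ Finset.univ.filter (fun r => v r ≠ 0), d0H := by
          rw [Finset.sum_const, smul_eq_mul]; rfl
      _ ≤ ∑ r ∈ Finset.univ.filter (fun r => v r ≠ 0), hammingNorm (A r) := by
          refine Finset.sum_le_sum ?_
          intro r hr
          rw [Finset.mem_filter] at hr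
          rw [hveq r]
          exact hcw_wt _ hr.2
      _ ≤ ∑ r : Fin m, hammingNorm (A r) :=
          Finset.sum_le_sum_of_subset (Finset.filter_subset _ _)
      _ = arrayWt A := hAwt.symm
  -- CORE : for each `j < s0`, a flattened shortened code
  have core : ∀ j : ℕ, j < s0 → ∃ d' : ℕ,
      (∃ C : Submodule F (Fin ((m - j) * n) → F),
        Module.finrank F C = (s0 - j) * (n - u0) ∧
        HasMinDist (C : Set (Fin ((m - j) * n) → F)) d') ∧
      d0V * d0H ≤ d' ∧
      ∃ A ∈ OneLevelEII C0 V0 0, A ≠ 0 ∧ arrayWt A = d' := by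
    intro j hjs
    have hjm : j ≤ m := by omega
    have hmj : 1 ≤ m - j := by omega
    set π : (Fin m → Fin (n - u0) → F) →ₗ[F] (Fin j → Fin (n - u0) → F) :=
      LinearMap.funLeft F (Fin (n - u0) → F) (Fin.castLE hjm) with hπ
    -- dimension of the shortened vertical code
    have hrk : (s0 - j) * (n - u0) ≤ Module.finrank F ↥(V0 ⊓ LinearMap.ker π) := by
      have h1 : Submodule.map V0.subtype (LinearMap.ker (π.domRestrict V0))
          = V0 ⊓ LinearMap.ker π := by
        rw [LinearMap.ker_domRestrict, Submodule.map_comap_subtype]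
      have h2 : Module.finrank F ↥(V0 ⊓ LinearMap.ker π)
          = Module.finrank F ↥(LinearMap.ker (π.domRestrict V0)) := by
        rw [← h1]; exact V0.finrank_map_subtype_eq _
      have h3 := LinearMap.finrank_range_add_finrank_ker (π.domRestrict V0)
      have h4 : Module.finrank F ↥(LinearMap.range (π.domRestrict V0)) ≤ j * (n - u0) := by
        have h5 := Submodule.finrank_le (LinearMap.range (π.domRestrict V0))
        have h6 : Module.finrank F (Fin j → Fin (n - u0) → F) = j * (n - u0) := by
          rw [Module.finrank_pi_fintype]
          simp [Module.finrank_pi]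
        omega
      rw [hV0dim] at h3
      have h7 : (s0 - j) * (n - u0) = s0 * (n - u0) - j * (n - u0) := Nat.sub_mul _ _ _
      omega
    obtain ⟨f, hf⟩ := exists_linearIndependent_of_le_finrank hrk
    have hg : LinearIndependent F fun i => ((f i : Fin m → Fin (n - u0) → F)) :=
      hf.map' (V0 ⊓ LinearMap.ker π).subtype (Submodule.ker_subtype _)
    set W : Submodule F (Fin m → Fin (n - u0) → F) :=
      Submodule.span F (Set.range fun i => (f i : Fin m → Fin (n - u0) → F)) with hW
    have hWrk : Module.finrank F ↥W = (s0 - j) * (n - u0) := by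
      rw [hW, finrank_span_eq_card hg, Fintype.card_fin]
    have hWle : W ≤ V0 ⊓ LinearMap.ker π := by
      rw [hW, Submodule.span_le]
      rintro x ⟨i, rfl⟩
      exact (f i).2
    -- the flattening map
    set emb : Fin (m - j) → Fin m := fun i => ⟨j + (i : ℕ), by have := i.2; omega⟩ with hemb
    set Φ : (Fin m → Fin (n - u0) → F) →ₗ[F] (Fin ((m - j) * n) → F) :=
      { toFun := fun v e => cw (v (emb (Fin.divNat e))) (Fin.modNat e)
        map_add' := by intro v v'; funext e; simp [hcw_add]
        map_smul' := by intro a v; funext e; simp [hcw_smul] } with hΦ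
    -- transfer of vanishing rows
    have hlow : ∀ v ∈ LinearMap.ker π, ∀ r : Fin m, (r : ℕ) < j → v r = 0 := by
      intro v hv r hr
      have h1 := congrFun (LinearMap.mem_ker.1 hv) ⟨(r : ℕ), hr⟩
      have h2 : Fin.castLE hjm ⟨(r : ℕ), hr⟩ = r := Fin.ext rfl
      simpa [hπ, LinearMap.funLeft_apply, h2] using h1
    have hker : ∀ v ∈ LinearMap.ker π, Φ v = 0 → v = 0 := by
      intro v hv hΦv
      funext r
      by_cases hr : (r : ℕ) < j
      · exact hlow v hv r hr
      · push_neg at hr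
        apply hcw_eq_zero
        funext c
        have he : ((r : ℕ) - j) * n + (c : ℕ) < (m - j) * n := by
          have h1 := r.2; have h2 := c.2
          have h3 : (r : ℕ) - j + 1 ≤ m - j := by omega
          calc ((r : ℕ) - j) * n + (c : ℕ) < ((r : ℕ) - j) * n + n := by omega
            _ = ((r : ℕ) - j + 1) * n := by ring
            _ ≤ (m - j) * n := Nat.mul_le_mul_right n h3
        have h0 := congrFun hΦv ⟨((r : ℕ) - j) * n + (c : ℕ), he⟩
        have hnum : ((r : ℕ) - j) * n + (c : ℕ) = (c : ℕ) + n * ((r : ℕ) - j) := by ring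
        have hdiv : emb (Fin.divNat (⟨((r : ℕ) - j) * n + (c : ℕ), he⟩ : Fin ((m - j) * n))) = r := by
          apply Fin.ext
          show j + (((r : ℕ) - j) * n + (c : ℕ)) / n = (r : ℕ)
          rw [hnum, Nat.add_mul_div_left _ _ hnpos, Nat.div_eq_of_lt c.2, Nat.zero_add]
          omega
        have hmod : Fin.modNat (⟨((r : ℕ) - j) * n + (c : ℕ), he⟩ : Fin ((m - j) * n)) = c := by
          apply Fin.ext
          show (((r : ℕ) - j) * n + (c : ℕ)) % n = (c : ℕ)
          rw [hnum, Nat.add_mul_mod_self_left, Nat.mod_eq_of_lt c.2]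
        rw [hΦ] at h0
        simp only [LinearMap.coe_mk, AddHom.coe_mk, hdiv, hmod, Pi.zero_apply] at h0
        exact h0
    -- weight transfer
    have hwt : ∀ v ∈ LinearMap.ker π, hammingNorm (Φ v) = arrayWt (Av v) := by
      intro v hv
      have hembinj : Function.Injective emb := by
        intro x y hxy
        have := congrArg (fun t : Fin m => (t : ℕ)) hxy
        simp only [hemb] at this
        exact Fin.ext (by omega)
      have h1 : (Φ v) ∘ (finProdFinEquiv : Fin (m - j) × Fin n ≃ Fin ((m - j) * n))
          = fun p : Fin (m - j) × Fin n => cw (v (emb p.1)) p.2 := by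
        funext p
        show cw (v (emb (Fin.divNat (finProdFinEquiv p)))) (Fin.modNat (finProdFinEquiv p)) = _
        have hs := finProdFinEquiv.symm_apply_apply p
        rw [show (finProdFinEquiv.symm : Fin ((m - j) * n) → Fin (m - j) × Fin n)
            = fun e => (Fin.divNat e, Fin.modNat e) from rfl] at hs
        have hd : Fin.divNat (finProdFinEquiv p) = p.1 := congrArg Prod.fst hs
        have hm' : Fin.modNat (finProdFinEquiv p) = p.2 := congrArg Prod.snd hs
        rw [hd, hm']
      have h2 : hammingNorm (Φ v) = ∑ i : Fin (m - j), hammingNorm (cw (v (emb i))) := by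
        rw [← hn_comp_equiv finProdFinEquiv (Φ v), h1]
        exact hn_prod (fun i c => cw (v (emb i)) c)
      rw [h2, hAv_wt]
      calc ∑ i : Fin (m - j), hammingNorm (cw (v (emb i)))
          = ∑ r ∈ Finset.univ.image emb, hammingNorm (cw (v r)) :=
            Eq.symm (Finset.sum_image (g := emb) (s := Finset.univ)
              (f := fun r => hammingNorm (cw (v r))) (fun x _ y _ h => hembinj h))
        _ = ∑ r : Fin m, hammingNorm (cw (v r)) := by
            refine Finset.sum_subset (Finset.subset_univ _) ?_
            intro r _ hr
            have hrj : (r : ℕ) < j := by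
              by_contra hc
              push_neg at hc
              apply hr
              refine Finset.mem_image.2 ⟨⟨(r : ℕ) - j, by have := r.2; omega⟩,
                Finset.mem_univ _, ?_⟩
              exact Fin.ext (by simp [hemb]; omega)
            rw [hlow v hv r hrj, hcw_zero]
            simp [hammingNorm]
    -- the flattened code
    set Cc : Submodule F (Fin ((m - j) * n) → F) := Submodule.map Φ W with hCc
    have hinjW : ∀ v ∈ W, Φ v = 0 → v = 0 := fun v hv => hker v (hWle hv).2
    have hrkCc : Module.finrank F ↥Cc = (s0 - j) * (n - u0) := by
      set ψ := Φ.comp W.subtype with hψ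
      have hψinj : Function.Injective ψ := by
        rw [← LinearMap.ker_eq_bot, LinearMap.ker_eq_bot']
        intro x hx
        exact Subtype.ext (hinjW x x.2 hx)
      have hrange : LinearMap.range ψ = Cc := by
        rw [hCc, hψ, LinearMap.range_comp, Submodule.range_subtype]
      rw [← hrange, ← (LinearEquiv.ofInjective ψ hψinj).finrank_eq, hWrk]
    have hCcne : ∃ x ∈ Cc, x ≠ (0 : Fin ((m - j) * n) → F) := by
      have hfr : Module.finrank F ↥W ≠ 0 := by
        rw [hWrk]
        exact Nat.mul_ne_zero (by omega) (by omega)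
      have hWbot : W ≠ ⊥ := by
        intro h
        rw [h, finrank_bot] at hfr
        exact hfr rfl
      obtain ⟨v, hvW, hv0⟩ := Submodule.exists_mem_ne_zero_of_ne_bot hWbot
      exact ⟨Φ v, Submodule.mem_map_of_mem hvW, fun h => hv0 (hinjW v hvW h)⟩
    obtain ⟨d', hmin⟩ := exists_min_dist Cc hCcne
    obtain ⟨c, hcC, hc0, hcweq⟩ := hmin.2
    obtain ⟨v, hvW, rfl⟩ := hcC
    have hv0 : v ≠ 0 := by
      rintro rfl
      exact hc0 (map_zero Φ)
    have hvV0 : v ∈ V0 := (hWle hvW).1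
    have hAeq : arrayWt (Av v) = d' := by rw [← hwt v (hWle hvW).2, hcweq]
    refine ⟨d', ⟨Cc, hrkCc, hmin⟩, ?_, Av v, hAv_mem v hvV0, hAv_ne v hv0, hAeq⟩
    rw [← hAeq]
    exact partA _ (hAv_mem v hvV0) (hAv_ne v hv0)
  -- assemble
  have bdd := fun N K => bdd_dOpt_set (F := F) N K
  have hj0s : j0 < s0 := by omega
  obtain ⟨d', ⟨Cc, hCrk, hCmin⟩, hd'ge, A, hAmem', hAne', hAwt'⟩ := core j0 hj0s
  have hd'le : d' ≤ d0V * d0H := by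
    rw [← hj0]
    exact le_csSup (bdd _ _) ⟨Cc, hCrk, hCmin⟩
  have hd'eq : d' = d0V * d0H := le_antisymm hd'le hd'ge
  have hceil : (s0 * (n - u0) + (n - u0) - 1) / (n - u0) = s0 := by
    have h1 : s0 * (n - u0) + (n - u0) - 1 = (n - u0 - 1) + s0 * (n - u0) := by
      have h2 : 1 ≤ n - u0 := hwpos
      omega
    rw [h1, Nat.add_mul_div_right _ _ (by omega : 0 < n - u0),
      Nat.div_eq_of_lt (by omega), Nat.zero_add]
  have hsub : ∀ j : ℕ, s0 * (n - u0) - j * (n - u0) = (s0 - j) * (n - u0) :=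
    fun j => (Nat.sub_mul s0 j _).symm
  have hmemS : d0V * d0H ∈ {d : ℕ | ∃ j : ℕ,
      j < (s0 * (n - u0) + (n - u0) - 1) / (n - u0) ∧
      d = dOpt F ((m - j) * n) (s0 * (n - u0) - j * (n - u0))} := by
    exact ⟨j0, by rw [hceil]; omega, by rw [hsub, hj0]⟩
  refine ⟨⟨partA, A, hAmem', hAne', by rw [hAwt', hd'eq]⟩, ?_⟩
  refine le_antisymm ?_ (Nat.sInf_le hmemS)
  refine le_csInf ⟨_, hmemS⟩ ?_
  rintro d ⟨j', hj'lt, rfl⟩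
  rw [hceil] at hj'lt
  obtain ⟨d'', ⟨Cc', hCrk', hCmin'⟩, hd''ge, -⟩ := core j' hj'lt
  calc d0V * d0H ≤ d'' := hd''ge
    _ ≤ dOpt F ((m - j') * n) (s0 * (n - u0) - j' * (n - u0)) := by
        rw [hsub]
        exact le_csSup (bdd _ _) ⟨Cc', hCrk', hCmin'⟩
end

section
/- Let q be a prime power and let C(q+1, u) be a 1-level EII code over F = GF(q) with n = q+1, m ≤ q²+1, 2 ≤ s1 ≤ m−1, u0 = q−1, u1 = q+1, horizontal code C0 a [q+1, 2, q] MDS code over GF(q) (e.g., a doubly extended Reed–Solomon code), and vertical code V0 an [m, m−s1, s1+1] MDS code over F² linear over F (e.g., a shortened doubly extended Reed–Solomon code over GF(q²)). Then C(q+1,u) has dimension k = 2(m−s1), its minimum distance is d = q(s1+1), and it meets bound (3): q(s1+1) = min{ d_opt^{(q)}[(m−j)(q+1), k − 2j] : 0 ≤ j ≤ ⌈k/2⌉ − 1 }. -/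
open scoped BigOperators

/-!
Each row of an EII array is the codeword of `C0` carrying the row's two systematic symbols, so it
vanishes exactly when its symbol does: a nonzero array has at least `s1 + 1` nonzero rows, each of
weight at least `q`, and a minimum-weight word of `V0` gives equality because a `[q + 1, 2, q]`
code has constant weight `q` (double counting). For bound (3), shortening `V0` in `j` positions
yields EII codes of length `(m - j)(q + 1)`, dimension at least `k - 2j` and the same distance
`q (s1 + 1)`; at `j = k/2 - 1` the Plotkin bound `(q + 1) d ≤ q N` for two-dimensional codes of
length `N = (s1 + 1)(q + 1)` shows that this distance is optimal.
-/

open Module Function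

section Hamming

variable {ι κ S : Type*} [Fintype ι] [Fintype κ] [Zero S] [DecidableEq S]

lemma hammingNorm_comp_equiv (e : κ ≃ ι) (x : ι → S) : hammingNorm (x ∘ e) = hammingNorm x := by
  unfold hammingNorm
  exact Finset.card_bij' (fun k _ => e k) (fun i _ => e.symm i) (by simp) (by simp) (by simp)
    (by simp)

lemma hammingNorm_extend_zero {e : κ → ι} (he : Injective e) (x : κ → S) :
    hammingNorm (extend e x 0) = hammingNorm x := by
  classical
  unfold hammingNorm
  symm
  refine Finset.card_nbij e (fun k hk => ?_) he.injOn fun i hi => ?_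
  · simpa [he.extend_apply] using hk
  · by_cases h : ∃ k, e k = i
    · obtain ⟨k, rfl⟩ := h
      exact ⟨k, by simpa [he.extend_apply] using hi, rfl⟩
    · simp [extend_apply' _ _ _ h] at hi

end Hamming

section Shortening

variable {F : Type*} [Field F] {ι κ M : Type*} [AddCommGroup M] [Module F M]

variable (F M) in
noncomputable def extendByZero (e : κ → ι) : (κ → M) →ₗ[F] (ι → M) where
  toFun x := extend e x 0
  map_add' x y := by simpa using extend_add e x y 0 0
  map_smul' a x := by simpa using extend_smul a e x 0

lemma extendByZero_injective {e : κ → ι} (he : Injective e) :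
    Injective (extendByZero F M e) :=
  fun x y hxy => funext fun k => by
    simpa [extendByZero, he.extend_apply] using congrFun hxy (e k)

noncomputable def shorten (C : Submodule F (ι → M)) (e : κ → ι) : Submodule F (κ → M) :=
  C.comap (extendByZero F M e)

lemma minDistAtLeast_shorten [Fintype ι] [Fintype κ] [DecidableEq M] {C : Submodule F (ι → M)}
    {e : κ → ι} (he : Injective e) {d : ℕ} (hC : MinDistAtLeast (C : Set (ι → M)) d) :
    MinDistAtLeast (shorten C e : Set (κ → M)) d := fun x hx hx0 =>
  hammingNorm_extend_zero he x ▸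
    hC _ hx ((map_ne_zero_iff _ (extendByZero_injective (F := F) he)).2 hx0)

lemma finrank_add_le_finrank_shorten [Fintype ι] [Fintype κ] [FiniteDimensional F M]
    (C : Submodule F (ι → M)) {e : κ → ι} (he : Injective e) :
    finrank F C + Fintype.card κ * finrank F M ≤
      finrank F (shorten C e) + Fintype.card ι * finrank F M := by
  set R := LinearMap.range (extendByZero F M e)
  have hR : finrank F R = Fintype.card κ * finrank F M := by
    rw [LinearMap.finrank_range_of_inj (extendByZero_injective he), finrank_pi_fintype]
    simp
  have hshort : finrank F (shorten C e) = finrank F ↥(R ⊓ C) := by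
    rw [shorten, ← Submodule.map_comap_eq]
    exact (Submodule.equivMapOfInjective _ (extendByZero_injective he) _).finrank_eq
  have hsup := Submodule.finrank_le (R ⊔ C)
  rw [finrank_pi_fintype, Finset.sum_const, Finset.card_univ, smul_eq_mul] at hsup
  have := Submodule.finrank_sup_add_finrank_inf_eq R C
  omega

end Shortening

section Plotkin

open Finset

variable {F ι : Type*} [Field F] [DecidableEq F] [Fintype ι]

lemma card_sub_one_mul_le_sum_hammingNorm {C : Submodule F (ι → F)} [Fintype C] {d : ℕ}
    (hd : MinDistAtLeast (C : Set (ι → F)) d) :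
    (Fintype.card C - 1) * d ≤ ∑ c : C, hammingNorm (c : ι → F) := by
  rw [← sum_erase univ (a := 0) (by simp), ← card_univ, ← card_erase_of_mem (mem_univ 0),
    ← smul_eq_mul]
  exact card_nsmul_le_sum _ _ _ fun c hc => hd c c.2 fun h => ne_of_mem_erase hc (Subtype.ext h)

variable [Fintype F]

lemma card_mul_card_filter_apply_ne_zero_le (C : Submodule F (ι → F)) [Fintype C] (i : ι) :
    Fintype.card F * #{c : C | (c : ι → F) i ≠ 0} ≤ (Fintype.card F - 1) * Fintype.card C := by
  classical
  set φ : C →ₗ[F] F := LinearMap.proj i ∘ₗ C.subtype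
  have hker : #{c : C | (c : ι → F) i = 0} = Fintype.card (LinearMap.ker φ) := by
    rw [← Fintype.card_subtype]
    exact Fintype.card_congr (Equiv.subtypeEquivRight fun _ => Iff.rfl)
  -- the coordinate functional has rank at most one
  have hcard : Fintype.card C ≤ Fintype.card F * Fintype.card (LinearMap.ker φ) := by
    rw [card_eq_pow_finrank (K := F) (V := C), card_eq_pow_finrank (K := F) (V := LinearMap.ker φ),
      ← pow_succ']
    apply Nat.pow_le_pow_right Fintype.card_pos
    have hrange := Submodule.finrank_le (LinearMap.range φ)
    rw [finrank_self] at hrange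
    have := LinearMap.finrank_range_add_finrank_ker φ
    omega
  have hsplit := card_filter_add_card_filter_not (s := univ) (fun c : C => (c : ι → F) i = 0)
  rw [card_univ, hker] at hsplit
  have : Fintype.card F * #{c : C | (c : ι → F) i ≠ 0} + Fintype.card C ≤
      Fintype.card F * Fintype.card C := by
    nlinarith
  rw [Nat.sub_one_mul]
  omega

lemma card_mul_sum_hammingNorm_le (C : Submodule F (ι → F)) [Fintype C] :
    Fintype.card F * ∑ c : C, hammingNorm (c : ι → F) ≤
      (Fintype.card F - 1) * Fintype.card C * Fintype.card ι := by
  have hswap : ∑ c : C, hammingNorm (c : ι → F) = ∑ i, #{c : C | (c : ι → F) i ≠ 0} := by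
    simp only [hammingNorm, card_filter]
    exact sum_comm
  rw [hswap, mul_sum]
  calc _ ≤ ∑ _i : ι, (Fintype.card F - 1) * Fintype.card C :=
        sum_le_sum fun i _ => card_mul_card_filter_apply_ne_zero_le C i
    _ = _ := by rw [sum_const, card_univ, smul_eq_mul, mul_comm]

/-- The Plotkin bound for two-dimensional codes. -/
lemma card_add_one_mul_le_of_finrank_eq_two {C : Submodule F (ι → F)} (h2 : finrank F C = 2)
    {d : ℕ} (hd : MinDistAtLeast (C : Set (ι → F)) d) :
    (Fintype.card F + 1) * d ≤ Fintype.card F * Fintype.card ι := by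
  have := Fintype.ofFinite C
  have hlow := card_sub_one_mul_le_sum_hammingNorm hd
  have hup := card_mul_sum_hammingNorm_le C
  rw [card_eq_pow_finrank (K := F) (V := C), h2] at hlow hup
  have hq : 2 ≤ Fintype.card F := Fintype.one_lt_card
  set q := Fintype.card F
  zify [(by omega : 1 ≤ q), (by nlinarith : 1 ≤ q ^ 2)] at hlow hup ⊢
  have hqq : (0 : ℤ) < q * (q - 1) := by nlinarith
  refine le_of_mul_le_mul_left ?_ hqq
  nlinarith [mul_le_mul_of_nonneg_left hlow (by positivity : (0 : ℤ) ≤ q)]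

/-- The sum of all weights is at least `(q² - 1) q` and, by double counting, at most that. -/
lemma hammingNorm_eq_card_of_finrank_eq_two {C : Submodule F (ι → F)}
    (hι : Fintype.card ι = Fintype.card F + 1) (h2 : finrank F C = 2)
    (hd : MinDistAtLeast (C : Set (ι → F)) (Fintype.card F)) {c : ι → F} (hc : c ∈ C)
    (hc0 : c ≠ 0) : hammingNorm c = Fintype.card F := by
  have := Fintype.ofFinite C
  set s := univ.erase (0 : C)
  have hle : ∀ x ∈ s, Fintype.card F ≤ hammingNorm (x : ι → F) := fun x hx =>
    hd x x.2 fun h => ne_of_mem_erase hx (Subtype.ext h)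
  have hsum : ∑ x ∈ s, hammingNorm (x : ι → F) = ∑ _x ∈ s, Fintype.card F := by
    refine le_antisymm ?_ (sum_le_sum hle)
    have hup := card_mul_sum_hammingNorm_le C
    rw [← sum_erase univ (a := 0) (by simp), card_eq_pow_finrank (K := F) (V := C), h2, hι] at hup
    rw [sum_const, card_erase_of_mem (mem_univ 0), card_univ,
      card_eq_pow_finrank (K := F) (V := C), h2, smul_eq_mul]
    have hq : 1 ≤ Fintype.card F := Fintype.card_pos
    set q := Fintype.card F
    zify [hq, (by nlinarith : 1 ≤ q ^ 2)] at hup ⊢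
    nlinarith
  exact ((sum_eq_sum_iff_of_le hle).1 hsum.symm ⟨c, hc⟩
    (mem_erase.2 ⟨fun h => hc0 (congrArg Subtype.val h), mem_univ _⟩)).symm

end Plotkin

section OptimalDistance

variable {F : Type*} [Field F] [DecidableEq F]

lemma exists_hasMinDist {ι S : Type*} [Fintype ι] [Zero S] [DecidableEq S] {C : Set (ι → S)}
    (h : ∃ c ∈ C, c ≠ 0) : ∃ d, HasMinDist C d := by
  classical
  have hex : ∃ d, ∃ c ∈ C, c ≠ 0 ∧ hammingNorm c = d :=
    let ⟨c, hc, hc0⟩ := h; ⟨_, c, hc, hc0, rfl⟩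
  exact ⟨Nat.find hex, fun c hc hc0 => Nat.find_min' hex ⟨c, hc, hc0, rfl⟩, Nat.find_spec hex⟩

lemma bddAbove_dOpt_set (N K : ℕ) : BddAbove {d : ℕ | ∃ C : Submodule F (Fin N → F),
    finrank F C = K ∧ HasMinDist (C : Set (Fin N → F)) d} :=
  ⟨N, fun _ ⟨_, _, _, c, _, _, hc⟩ => hc ▸ (hammingNorm_le_card_fintype.trans_eq (by simp))⟩

/-- Pass to a `K`-dimensional subcode. -/
lemma le_dOpt_of_le_finrank {N K D : ℕ} {C : Submodule F (Fin N → F)} (hK : 0 < K)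
    (hKC : K ≤ finrank F C) (hC : MinDistAtLeast (C : Set (Fin N → F)) D) : D ≤ dOpt F N K := by
  obtain ⟨f, hf⟩ := exists_linearIndependent_of_le_finrank hKC
  set C' := Submodule.span F (Set.range (C.subtype ∘ f))
  have hC' : finrank F C' = K := by
    rw [finrank_span_eq_card (hf.map' _ C.ker_subtype), Fintype.card_fin]
  have hle : C' ≤ C := Submodule.span_le.2 <| Set.range_subset_iff.2 fun i => (f i).2
  have hne : C' ≠ ⊥ := fun h => by rw [h, finrank_bot] at hC'; omega
  obtain ⟨d, hd⟩ := exists_hasMinDist (Submodule.exists_mem_ne_zero_of_ne_bot hne)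
  obtain ⟨c, hc, hc0, rfl⟩ := hd.2
  exact (hC c (hle hc) hc0).trans (le_csSup (bddAbove_dOpt_set N K) ⟨C', hC', hd⟩)

lemma dOpt_two_le [Fintype F] (N : ℕ) :
    dOpt F N 2 ≤ Fintype.card F * N / (Fintype.card F + 1) :=
  csSup_le' fun _ ⟨_, h2, hd⟩ => (Nat.le_div_iff_mul_le (by omega)).2 <| by
    simpa [mul_comm] using card_add_one_mul_le_of_finrank_eq_two h2 hd.1

end OptimalDistance

section ArrayWeight

open Finset

variable {F : Type*} [Field F] [DecidableEq F] {m n : ℕ}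

lemma arrayWt_eq_sum_filter (A : Fin m → Fin n → F) :
    arrayWt A = ∑ r with A r ≠ 0, hammingNorm (A r) := by
  rw [sum_filter_of_ne fun _ _ h => hammingNorm_ne_zero_iff.1 h]
  simp only [arrayWt, hammingNorm, card_filter]
  exact Fintype.sum_prod_type _

lemma mul_hammingNorm_le_arrayWt {A : Fin m → Fin n → F} {d : ℕ}
    (h : ∀ r, A r ≠ 0 → d ≤ hammingNorm (A r)) : d * hammingNorm A ≤ arrayWt A := by
  rw [arrayWt_eq_sum_filter, mul_comm, ← smul_eq_mul]
  exact card_nsmul_le_sum _ _ _ fun r hr => h r (mem_filter.1 hr).2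

lemma arrayWt_eq_mul_hammingNorm {A : Fin m → Fin n → F} {d : ℕ}
    (h : ∀ r, A r ≠ 0 → hammingNorm (A r) = d) : arrayWt A = d * hammingNorm A := by
  rw [arrayWt_eq_sum_filter, sum_congr rfl fun r hr => h r (mem_filter.1 hr).2, sum_const,
    smul_eq_mul, mul_comm]
  rfl

variable (F) in
noncomputable def flattenEquiv (m n : ℕ) : Matrix (Fin m) (Fin n) F ≃ₗ[F] (Fin (m * n) → F) :=
  (LinearEquiv.curry F F (Fin m) (Fin n)).symm ≪≫ₗ
    LinearEquiv.funCongrLeft F F finProdFinEquiv.symm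

lemma hammingNorm_flattenEquiv (A : Matrix (Fin m) (Fin n) F) :
    hammingNorm (flattenEquiv F m n A) = arrayWt A :=
  hammingNorm_comp_equiv finProdFinEquiv.symm (fun p : Fin m × Fin n => A p.1 p.2)

end ArrayWeight

section EII

variable {F : Type*} [Field F] {m n w : ℕ} {C0 : Submodule F (Fin n → F)}

variable (F) in
def takeCoords (n w : ℕ) : (Fin n → F) →ₗ[F] (Fin w → F) where
  toFun c i := if h : (i : ℕ) < n then c ⟨i, h⟩ else 0
  map_add' x y := by funext i; by_cases h : (i : ℕ) < n <;> simp [h]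
  map_smul' a x := by funext i; by_cases h : (i : ℕ) < n <;> simp [h]

lemma colSymb_zero (A : Matrix (Fin m) (Fin n) F) (r : Fin m) :
    colSymb A 0 w r = takeCoords F n w (A r) := by
  funext i
  simp [colSymb, takeCoords]

noncomputable def SystematicOn.linearEquiv (h : SystematicOn C0 w) : C0 ≃ₗ[F] (Fin w → F) :=
  LinearEquiv.ofBijective (takeCoords F n w ∘ₗ C0.subtype) h

noncomputable def SystematicOn.rowEncode (h : SystematicOn C0 w) (m : ℕ) :
    (Fin m → Fin w → F) →ₗ[F] Matrix (Fin m) (Fin n) F :=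
  (C0.subtype ∘ₗ h.linearEquiv.symm.toLinearMap).compLeft (Fin m)

namespace SystematicOn

variable (h : SystematicOn C0 w)
include h

lemma rowEncode_apply (v : Fin m → Fin w → F) (r : Fin m) :
    h.rowEncode m v r = h.linearEquiv.symm (v r) := rfl

lemma rowEncode_injective : Injective (h.rowEncode m) := fun _ _ hxy => funext fun r =>
  h.linearEquiv.symm.injective (Subtype.ext (congrFun hxy r))

lemma colSymb_rowEncode (v : Fin m → Fin w → F) : colSymb (h.rowEncode m v) 0 w = v :=
  funext fun r => by rw [colSymb_zero]; exact h.linearEquiv.apply_symm_apply (v r)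

lemma finrank_map_rowEncode (V : Submodule F (Fin m → Fin w → F)) :
    finrank F (V.map (h.rowEncode m)) = finrank F V :=
  (Submodule.equivMapOfInjective _ h.rowEncode_injective V).finrank_eq.symm

lemma coe_map_rowEncode (V : Submodule F (Fin m → Fin w → F)) :
    (V.map (h.rowEncode m) : Set (Matrix (Fin m) (Fin n) F)) = OneLevelEII C0 V 0 := by
  ext A
  constructor
  · rintro ⟨v, hv, rfl⟩
    exact ⟨fun r c hc => absurd hc (Nat.not_lt_zero _), fun r => (h.linearEquiv.symm (v r)).2,
      by rwa [h.colSymb_rowEncode]⟩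
  · rintro ⟨-, hrows, hsymb⟩
    refine ⟨colSymb A 0 w, hsymb, funext fun r => ?_⟩
    rw [rowEncode_apply, (h.linearEquiv.symm_apply_eq).2 (by rw [colSymb_zero]; rfl :
      colSymb A 0 w r = h.linearEquiv ⟨A r, hrows r⟩)]

variable [DecidableEq F]

lemma hammingNorm_rowEncode (v : Fin m → Fin w → F) :
    hammingNorm (h.rowEncode m v) = hammingNorm v :=
  hammingNorm_comp (fun _ x => (h.linearEquiv.symm x : Fin n → F))
    (fun _ _ _ hxy => h.linearEquiv.symm.injective (Subtype.ext hxy)) (fun _ => by simp)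

variable {d0 dV : ℕ} {V : Submodule F (Fin m → Fin w → F)}

lemma mul_le_arrayWt_rowEncode (hC0 : MinDistAtLeast (C0 : Set (Fin n → F)) d0)
    (hV : MinDistAtLeast (V : Set (Fin m → Fin w → F)) dV) {v : Fin m → Fin w → F} (hv : v ∈ V)
    (hv0 : v ≠ 0) : d0 * dV ≤ arrayWt (h.rowEncode m v) :=
  calc d0 * dV ≤ d0 * hammingNorm (h.rowEncode m v) := by
        rw [hammingNorm_rowEncode]
        exact Nat.mul_le_mul_left d0 (hV v hv hv0)
    _ ≤ arrayWt (h.rowEncode m v) :=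
        mul_hammingNorm_le_arrayWt fun r hr => hC0 _ (h.linearEquiv.symm (v r)).2 hr

lemma mul_le_arrayWt_of_mem_oneLevelEII (hC0 : MinDistAtLeast (C0 : Set (Fin n → F)) d0)
    (hV : MinDistAtLeast (V : Set (Fin m → Fin w → F)) dV) :
    ∀ A ∈ OneLevelEII C0 V 0, A ≠ 0 → d0 * dV ≤ arrayWt A := by
  rw [← h.coe_map_rowEncode]
  rintro _ ⟨v, hv, rfl⟩ hv0
  exact h.mul_le_arrayWt_rowEncode hC0 hV hv (by rintro rfl; simp at hv0)

lemma exists_mem_oneLevelEII_arrayWt_eq (hC0 : ∀ c ∈ C0, c ≠ 0 → hammingNorm c = d0)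
    (hV : HasMinDist (V : Set (Fin m → Fin w → F)) dV) :
    ∃ A ∈ OneLevelEII C0 V 0, A ≠ 0 ∧ arrayWt A = d0 * dV := by
  obtain ⟨v, hv, hv0, hvwt⟩ := hV.2
  refine ⟨_, h.coe_map_rowEncode V ▸ Submodule.mem_map_of_mem hv,
    (map_ne_zero_iff _ h.rowEncode_injective).2 hv0, ?_⟩
  rw [arrayWt_eq_mul_hammingNorm (A := h.rowEncode m v) fun r =>
    hC0 _ (h.linearEquiv.symm (v r)).2, h.hammingNorm_rowEncode, hvwt]

/-- Witnessed by the EII code built on the shortening of `V` to its first `m - j` positions. -/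
lemma le_dOpt_of_shorten (hC0 : MinDistAtLeast (C0 : Set (Fin n → F)) d0)
    (hV : MinDistAtLeast (V : Set (Fin m → Fin w → F)) dV) {j K : ℕ} (hj : j ≤ m) (hK : 0 < K)
    (hKV : K + j * w ≤ finrank F V) : d0 * dV ≤ dOpt F ((m - j) * n) K := by
  have hjm : m - j ≤ m := Nat.sub_le m j
  have hVj := finrank_add_le_finrank_shorten V (Fin.castLE_injective hjm)
  rw [Fintype.card_fin, Fintype.card_fin, finrank_fin_fun] at hVj
  have hmw : j * w + (m - j) * w = m * w := by rw [← add_mul, Nat.add_sub_cancel' hj]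
  refine le_dOpt_of_le_finrank hK (C := ((shorten V (Fin.castLE hjm)).map
    (h.rowEncode _)).map (flattenEquiv F _ _).toLinearMap) ?_ ?_
  · rw [LinearEquiv.finrank_map_eq, h.finrank_map_rowEncode]
    omega
  · rintro _ ⟨_, ⟨v, hv, rfl⟩, rfl⟩ hv0
    rw [LinearEquiv.coe_coe, hammingNorm_flattenEquiv]
    exact h.mul_le_arrayWt_rowEncode hC0 (minDistAtLeast_shorten (Fin.castLE_injective _) hV) hv
      (by rintro rfl; simp at hv0)

end SystematicOn

end EII

theorem stmt8_general {F : Type*} [Field F] [Fintype F] [DecidableEq F]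
    {q m s0 s1 : ℕ} (hq : Fintype.card F = q)
    (hm : m = s0 + s1) (hs0 : 1 ≤ s0)
    (C0 : Submodule F (Fin (q + 1) → F))
    (hC0dim : Module.finrank F C0 = 2)
    (hC0dist : HasMinDist (C0 : Set (Fin (q + 1) → F)) q)
    (hC0sys : SystematicOn C0 ((q + 1) - (q - 1)))
    (V0 : Submodule F (Fin m → Fin ((q + 1) - (q - 1)) → F))
    (hV0dim : Module.finrank F V0 = (m - s1) * ((q + 1) - (q - 1)))
    (hV0dist : HasMinDist (V0 : Set (Fin m → Fin ((q + 1) - (q - 1)) → F)) (s1 + 1)) :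
    (∃ W : Submodule F (Matrix (Fin m) (Fin (q + 1)) F),
        (W : Set (Matrix (Fin m) (Fin (q + 1)) F)) = OneLevelEII C0 V0 0 ∧
        Module.finrank F W = 2 * (m - s1)) ∧
    ((∀ A ∈ OneLevelEII C0 V0 0, A ≠ 0 → q * (s1 + 1) ≤ arrayWt A) ∧
      (∃ A ∈ OneLevelEII C0 V0 0, A ≠ 0 ∧ arrayWt A = q * (s1 + 1))) ∧
    q * (s1 + 1) =
      sInf {d : ℕ | ∃ j : ℕ, j < (2 * (m - s1) + 1) / 2 ∧
        d = dOpt F ((m - j) * (q + 1)) (2 * (m - s1) - 2 * j)} := by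
  subst hq
  have hq2 : 2 ≤ Fintype.card F := Fintype.one_lt_card
  generalize hw : Fintype.card F + 1 - (Fintype.card F - 1) = w at *
  obtain rfl : w = 2 := by omega
  have hC0wt : ∀ c ∈ C0, c ≠ 0 → hammingNorm c = Fintype.card F := fun _ hc hc0 =>
    hammingNorm_eq_card_of_finrank_eq_two (Fintype.card_fin _) hC0dim hC0dist.1 hc hc0
  have hdOpt_ge : ∀ j < m - s1, Fintype.card F * (s1 + 1) ≤
      dOpt F ((m - j) * (Fintype.card F + 1)) (2 * (m - s1) - 2 * j) := fun j hj =>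
    hC0sys.le_dOpt_of_shorten hC0dist.1 hV0dist.1 (by omega) (by omega) (by rw [hV0dim]; omega)
  have hdOpt_last : dOpt F ((m - (m - s1 - 1)) * (Fintype.card F + 1))
      (2 * (m - s1) - 2 * (m - s1 - 1)) ≤ Fintype.card F * (s1 + 1) := by
    rw [show m - (m - s1 - 1) = s1 + 1 by omega, show 2 * (m - s1) - 2 * (m - s1 - 1) = 2 by omega]
    refine (dOpt_two_le _).trans_eq ?_
    rw [← mul_assoc, Nat.mul_div_cancel _ (by omega)]
  refine ⟨⟨_, hC0sys.coe_map_rowEncode V0, ?_⟩, ⟨hC0sys.mul_le_arrayWt_of_mem_oneLevelEII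
    hC0dist.1 hV0dist.1, hC0sys.exists_mem_oneLevelEII_arrayWt_eq hC0wt hV0dist⟩, ?_⟩
  · rw [hC0sys.finrank_map_rowEncode, hV0dim, mul_comm]
  refine (IsLeast.csInf_eq ⟨?_, ?_⟩).symm
  · exact ⟨m - s1 - 1, by omega, (hdOpt_ge _ (by omega)).antisymm hdOpt_last⟩
  · rintro _ ⟨j, hj, rfl⟩
    exact hdOpt_ge j (by omega)

/-- For `q` a prime power (realized as the cardinality of the field `F`),
the 1-level EII code of `m × (q+1)` arrays with `u0 = q−1`, `u1 = q+1`, horizontal code a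
`[q+1,2,q]` MDS code and vertical code an `[m, m−s1, s1+1]` MDS code over `F²`, has
dimension `2(m−s1)`, minimum distance exactly `q(s1+1)`, and meets bound (3). -/
theorem stmt8 {F : Type*} [Field F] [Fintype F] [DecidableEq F]
    {q m s0 s1 : ℕ} (hq : Fintype.card F = q)
    (hmq : m ≤ q ^ 2 + 1) (hs1lo : 2 ≤ s1) (hs1hi : s1 ≤ m - 1)
    (hm : m = s0 + s1) (hs0 : 1 ≤ s0)
    (C0 : Submodule F (Fin (q + 1) → F))
    (hC0dim : Module.finrank F C0 = 2)
    (hC0dist : HasMinDist (C0 : Set (Fin (q + 1) → F)) q)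
    (hC0sys : SystematicOn C0 ((q + 1) - (q - 1)))
    (V0 : Submodule F (Fin m → Fin ((q + 1) - (q - 1)) → F))
    (hV0dim : Module.finrank F V0 = (m - s1) * ((q + 1) - (q - 1)))
    (hV0dist : HasMinDist (V0 : Set (Fin m → Fin ((q + 1) - (q - 1)) → F)) (s1 + 1)) :
    (∃ W : Submodule F (Matrix (Fin m) (Fin (q + 1)) F),
        (W : Set (Matrix (Fin m) (Fin (q + 1)) F)) = OneLevelEII C0 V0 0 ∧
        Module.finrank F W = 2 * (m - s1)) ∧
    ((∀ A ∈ OneLevelEII C0 V0 0, A ≠ 0 → q * (s1 + 1) ≤ arrayWt A) ∧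
      (∃ A ∈ OneLevelEII C0 V0 0, A ≠ 0 ∧ arrayWt A = q * (s1 + 1))) ∧
    q * (s1 + 1) =
      sInf {d : ℕ | ∃ j : ℕ, j < (2 * (m - s1) + 1) / 2 ∧
        d = dOpt F ((m - j) * (q + 1)) (2 * (m - s1) - 2 * j)} :=
  stmt8_general hq hm hs0 C0 hC0dim hC0dist hC0sys V0 hV0dim hV0dist
end
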